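/- Let n, m be natural numbers with 1 ≤ m ≤ n, set D = 2ⁿ, R = 2^{n−m}, K = 2^m, and q = 2^{−m}. Let ρ be a D×D Hermitian positive semidefinite complex matrix with trace 1, with orthonormal eigenbasis (v_j)_{j=1}^D and eigenvalues μ₁ ≥ μ₂ ≥ … ≥ μ_D in descending order. Define the grouped spectral projectors Λ_k = Σ_{j=(k−1)R+1}^{kR} |v_j⟩⟨v_j| and p_k = Tr(Λ_k ρ) = Σ_{j=(k−1)R+1}^{kR} μ_j. Then for every family Λ' : Fin K → Matrix (Fin D) (Fin D) ℂ of pairwise orthogonal orthogonal projectors of rank R summing to the identity, with p'_k = Tr(Λ'_k ρ), one has Σ_{k=1}^K (p'_k − q)²/(p'_k + q) ≤ Σ_{k=1}^K (p_k − q)²/(p_k + q). -/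

import Mathlib

/-!
With `wₖⱼ = ‖Λ'ₖ vⱼ‖²` one has `p'ₖ = ∑ⱼ μⱼ wₖⱼ`, where `0 ≤ wₖⱼ ≤ 1`, every column of `w`
sums to `1` and every row to `R = rank Λ'ₖ`. By a bathtub argument any `s` of the `p'ₖ` therefore
sum to at most the `sR` largest eigenvalues, which is `p₀ + ⋯ + p_{s-1}`: the block sums `p`
majorize `p'`. As `t ↦ (t - q)² / (t + q)` is convex on `t > -q`, Karamata's inequality gives the
claim; it follows from the tangent lines at the `p'ₖ` sorted decreasingly and Abel summation.
-/

open Finset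
open scoped InnerProductSpace ComplexOrder

theorem Fin.mul_sum_le_sum_mul_of_antitone {K : ℕ} {c d : Fin K → ℝ} (hc : Antitone c)
    (hd : ∀ j ≤ K, 0 ≤ ∑ i : Fin K with i.val < j, d i) {t : ℝ} (ht : ∀ i, t ≤ c i) :
    t * ∑ i, d i ≤ ∑ i, c i * d i := by
  induction K generalizing t with
  | zero => simp
  | succ K ih =>
    have hpartial : ∀ j ≤ K, ∑ i : Fin K with i.val < j, d i.castSucc
        = ∑ i : Fin (K + 1) with i.val < j, d i := fun j hj => by
      simp [sum_filter, Fin.sum_univ_castSucc, hj.not_gt]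
    have hinit := ih (hc.comp_monotone Fin.strictMono_castSucc.monotone)
      (fun j hj => (hpartial j hj).symm ▸ hd j (by omega)) (t := c (Fin.last K))
      (fun i => hc (Fin.le_last i.castSucc))
    have htotal : 0 ≤ ∑ i, d i := by simpa [Fin.is_le] using hd (K + 1) le_rfl
    rw [Fin.sum_univ_castSucc d] at htotal ⊢
    rw [Fin.sum_univ_castSucc]
    simp only [Function.comp_apply] at hinit
    nlinarith [mul_nonneg (sub_nonneg.2 (ht (Fin.last K))) htotal]

theorem ConvexOn.add_deriv_mul_sub_le {s : Set ℝ} {f : ℝ → ℝ} (hf : ConvexOn ℝ s f) {x y : ℝ}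
    (hx : x ∈ s) (hy : y ∈ s) (hfd : DifferentiableAt ℝ f x) :
    f x + deriv f x * (y - x) ≤ f y := by
  rcases lt_trichotomy x y with hxy | rfl | hxy
  · have := hf.deriv_le_slope hx hy hxy hfd
    rw [slope_def_field, le_div_iff₀ (sub_pos.2 hxy)] at this
    linarith
  · simp
  · have := hf.slope_le_deriv hy hx hxy hfd
    rw [slope_def_field, div_le_iff₀ (sub_pos.2 hxy)] at this
    linarith

theorem ConvexOn.sum_le_sum_of_antitone_of_partialSums_le {s : Set ℝ} {f : ℝ → ℝ}
    (hf : ConvexOn ℝ s f) (hfd : ∀ t ∈ s, DifferentiableAt ℝ f t) {K : ℕ} {x y : Fin K → ℝ}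
    (hxs : ∀ i, x i ∈ s) (hys : ∀ i, y i ∈ s) (hx : Antitone x)
    (hxy : ∀ j ≤ K, ∑ i : Fin K with i.val < j, x i ≤ ∑ i : Fin K with i.val < j, y i)
    (hsum : ∑ i, x i = ∑ i, y i) :
    ∑ i, f (x i) ≤ ∑ i, f (y i) := by
  obtain ⟨t, ht⟩ := (Set.finite_range fun i => deriv f (x i)).bddBelow
  have habel : 0 ≤ ∑ i, deriv f (x i) * (y i - x i) := by
    have := Fin.mul_sum_le_sum_mul_of_antitone (d := fun i => y i - x i)
      (fun i j hij => hf.monotoneOn_deriv hfd (hxs j) (hxs i) (hx hij))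
      (fun j _ => by simpa [sum_sub_distrib] using hxy j ‹_›) (fun i => ht ⟨i, rfl⟩)
    simpa [sum_sub_distrib, hsum] using this
  calc ∑ i, f (x i) ≤ ∑ i, (f (x i) + deriv f (x i) * (y i - x i)) := by
        rw [sum_add_distrib]; linarith
    _ ≤ ∑ i, f (y i) :=
        sum_le_sum fun i _ => hf.add_deriv_mul_sub_le (hxs i) (hys i) (hfd _ (hxs i))

theorem ConvexOn.sum_le_sum_of_forall_sum_le {s : Set ℝ} {f : ℝ → ℝ}
    (hf : ConvexOn ℝ s f) (hfd : ∀ t ∈ s, DifferentiableAt ℝ f t) {K : ℕ} {x y : Fin K → ℝ}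
    (hxs : ∀ k, x k ∈ s) (hys : ∀ k, y k ∈ s)
    (hxy : ∀ S : Finset (Fin K), ∑ k ∈ S, x k ≤ ∑ k : Fin K with k.val < #S, y k)
    (hsum : ∑ k, x k = ∑ k, y k) :
    ∑ k, f (x k) ≤ ∑ k, f (y k) := by
  set σ := Tuple.sort fun k => -x k
  have hσ : Antitone (x ∘ σ) := fun a b hab =>
    neg_le_neg_iff.1 (Tuple.monotone_sort (fun k => -x k) hab)
  rw [← Equiv.sum_comp σ (fun k => f (x k))]
  refine hf.sum_le_sum_of_antitone_of_partialSums_le hfd (fun i => hxs _) hys hσ (fun j hj => ?_)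
    (by rw [← hsum]; exact Equiv.sum_comp σ x)
  simpa [sum_map, Fin.card_filter_val_lt, hj] using
    hxy ((univ.filter fun i : Fin K => i.val < j).map σ.toEmbedding)

theorem convexOn_sq_sub_div_add (q : ℝ) :
    ConvexOn ℝ (Set.Ioi (-q)) fun t => (t - q) ^ 2 / (t + q) := by
  have hinv : ConvexOn ℝ (Set.Ioi (-q)) fun t => (t + q)⁻¹ := by
    have h := (convexOn_zpow (𝕜 := ℝ) (-1)).translate_right q
    rw [show (fun z => q + z) ⁻¹' Set.Ioi 0 = Set.Ioi (-q) by
      ext t; simp [neg_lt_iff_pos_add']] at h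
    exact h.congr fun t _ => by simp [add_comm]
  -- `(t - q)² / (t + q) = t - 3q + (2q)² / (t + q)`
  refine (((convexOn_id (convex_Ioi (-q))).add_const (-3 * q)).add
    (hinv.smul (sq_nonneg (2 * q)))).congr fun t (ht : -q < t) => ?_
  have : t + q ≠ 0 := by linarith
  simp only [Pi.add_apply, id, smul_eq_mul]
  field_simp
  ring

theorem differentiableAt_sq_sub_div_add {q t : ℝ} (ht : t ∈ Set.Ioi (-q)) :
    DifferentiableAt ℝ (fun t => (t - q) ^ 2 / (t + q)) t := by
  have : t + q ≠ 0 := by simp at ht; linarith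
  fun_prop (disch := exact this)

theorem Finset.sum_mul_le_sum_of_threshold {ι : Type*} [Fintype ι] {μ w : ι → ℝ} {s : Finset ι}
    {c : ℝ} (hs : ∀ i ∈ s, c ≤ μ i) (hsc : ∀ i ∉ s, μ i ≤ c) (hw0 : ∀ i, 0 ≤ w i)
    (hw1 : ∀ i, w i ≤ 1) (hw : ∑ i, w i = #s) : ∑ i, μ i * w i ≤ ∑ i ∈ s, μ i := by
  classical
  have hterm : ∀ i, (μ i - c) * (w i - if i ∈ s then 1 else 0) ≤ 0 := fun i => by
    split_ifs with hi
    · exact mul_nonpos_of_nonneg_of_nonpos (sub_nonneg.2 (hs i hi)) (by linarith [hw1 i])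
    · exact mul_nonpos_of_nonpos_of_nonneg (sub_nonpos.2 (hsc i hi)) (by linarith [hw0 i])
  have hsplit : ∑ i, μ i * w i - ∑ i ∈ s, μ i
      = ∑ i, (μ i - c) * (w i - if i ∈ s then 1 else 0) + c * (∑ i, w i - #s) := by
    simp only [mul_sub, sub_mul, sum_sub_distrib, mul_ite, mul_one, mul_zero, ← mul_sum,
      Fintype.sum_ite_mem, sum_const, nsmul_eq_mul]
    ring
  linarith [sum_nonpos fun i (_ : i ∈ univ) => hterm i, hw ▸ hsplit]

theorem Fin.sum_mul_le_sum_filter_val_lt {N r : ℕ} {μ w : Fin N → ℝ} (hμ : Antitone μ)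
    (hw0 : ∀ i, 0 ≤ w i) (hw1 : ∀ i, w i ≤ 1) (hw : ∑ i, w i = r) :
    ∑ i, μ i * w i ≤ ∑ i : Fin N with i.val < r, μ i := by
  have hrN : r ≤ N := by
    have : (r : ℝ) ≤ N := by simpa [hw] using sum_le_sum fun i (_ : i ∈ univ) => hw1 i
    exact_mod_cast this
  obtain ⟨c, hc, hc'⟩ :
      ∃ c, (∀ i : Fin N, i.val < r → c ≤ μ i) ∧ ∀ i : Fin N, r ≤ i.val → μ i ≤ c := by
    rcases hrN.lt_or_eq with hr | rfl
    · exact ⟨μ ⟨r, hr⟩, fun i hi => hμ (Fin.le_def.2 hi.le), fun i hi => hμ (Fin.le_def.2 hi)⟩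
    · obtain ⟨c, hc⟩ := (Set.finite_range μ).bddBelow
      exact ⟨c, fun i _ => hc ⟨i, rfl⟩, fun i hi => absurd i.isLt hi.not_gt⟩
  refine sum_mul_le_sum_of_threshold (fun i hi => hc i (by simpa using hi))
    (fun i hi => hc' i (by simpa using hi)) hw0 hw1 ?_
  rw [Fin.card_filter_val_lt, min_eq_right hrN, hw]

namespace LinearMap

variable {𝕜 E ι κ : Type*} [RCLike 𝕜] [NormedAddCommGroup E] [InnerProductSpace 𝕜 E]
  [Fintype ι] [Fintype κ]

theorem IsSymmetricProjection.inner_apply_self {P : E →ₗ[𝕜] E} (hP : P.IsSymmetricProjection)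
    (x : E) : ⟪x, P x⟫_𝕜 = (‖P x‖ : 𝕜) ^ 2 := by
  calc ⟪x, P x⟫_𝕜 = ⟪x, P (P x)⟫_𝕜 := by rw [← Module.End.mul_apply, hP.isIdempotentElem.eq]
    _ = ⟪P x, P x⟫_𝕜 := (hP.isSymmetric x (P x)).symm
    _ = (‖P x‖ : 𝕜) ^ 2 := inner_self_eq_norm_sq_to_K _

theorem IsSymmetricProjection.re_trace_comp_eq_sum {P T : E →ₗ[𝕜] E}
    (hP : P.IsSymmetricProjection) (b : OrthonormalBasis ι 𝕜 E) {μ : ι → ℝ}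
    (hT : ∀ i, T (b i) = (μ i : 𝕜) • b i) :
    RCLike.re (trace 𝕜 E (P ∘ₗ T)) = ∑ i, μ i * ‖P (b i)‖ ^ 2 := by
  simp [trace_eq_sum_inner _ b, hT, inner_smul_right, hP.inner_apply_self]

theorem IsSymmetricProjection.re_trace_eq_sum {P : E →ₗ[𝕜] E} (hP : P.IsSymmetricProjection)
    (b : OrthonormalBasis ι 𝕜 E) : RCLike.re (trace 𝕜 E P) = ∑ i, ‖P (b i)‖ ^ 2 := by
  simp [trace_eq_sum_inner _ b, hP.inner_apply_self]

theorem sum_norm_sq_apply_of_sum_eq_one {P : κ → E →ₗ[𝕜] E}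
    (hP : ∀ k, (P k).IsSymmetricProjection) (hsum : ∑ k, P k = 1) (x : E) :
    ∑ k, ‖P k x‖ ^ 2 = ‖x‖ ^ 2 := by
  have h : ∑ k, ⟪x, P k x⟫_𝕜 = ⟪x, x⟫_𝕜 := by
    rw [← inner_sum, ← LinearMap.sum_apply, hsum, Module.End.one_apply]
  simp_rw [(hP _).inner_apply_self, inner_self_eq_norm_sq_to_K] at h
  exact_mod_cast h

theorem sum_re_trace_comp_eq_sum (b : OrthonormalBasis ι 𝕜 E) {T : E →ₗ[𝕜] E} {μ : ι → ℝ}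
    (hT : ∀ i, T (b i) = (μ i : 𝕜) • b i) {P : κ → E →ₗ[𝕜] E}
    (hP : ∀ k, (P k).IsSymmetricProjection) (hsum : ∑ k, P k = 1) :
    ∑ k, RCLike.re (trace 𝕜 E (P k ∘ₗ T)) = ∑ i, μ i := by
  simp_rw [(hP _).re_trace_comp_eq_sum b hT]
  rw [sum_comm]
  simp [← mul_sum, sum_norm_sq_apply_of_sum_eq_one hP hsum, b.norm_eq_one]

theorem sum_re_trace_comp_le_sum_filter_val_lt {N : ℕ} (b : OrthonormalBasis (Fin N) 𝕜 E)
    {T : E →ₗ[𝕜] E} {μ : Fin N → ℝ} (hT : ∀ i, T (b i) = (μ i : 𝕜) • b i) {P : κ → E →ₗ[𝕜] E}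
    (hP : ∀ k, (P k).IsSymmetricProjection) (hsum : ∑ k, P k = 1) (hμ : Antitone μ) {R : ℕ}
    (hR : ∀ k, RCLike.re (trace 𝕜 E (P k)) = R) (S : Finset κ) :
    ∑ k ∈ S, RCLike.re (trace 𝕜 E (P k ∘ₗ T)) ≤ ∑ i : Fin N with i.val < #S * R, μ i := by
  simp_rw [(hP _).re_trace_comp_eq_sum b hT]
  rw [sum_comm]
  simp_rw [← mul_sum]
  refine Fin.sum_mul_le_sum_filter_val_lt hμ (fun i => sum_nonneg fun k _ => sq_nonneg _)
    (fun i => ?_) ?_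
  · calc ∑ k ∈ S, ‖P k (b i)‖ ^ 2 ≤ ∑ k, ‖P k (b i)‖ ^ 2 :=
          sum_le_sum_of_subset_of_nonneg (subset_univ S) fun k _ _ => sq_nonneg _
      _ = 1 := by rw [sum_norm_sq_apply_of_sum_eq_one hP hsum, b.norm_eq_one, one_pow]
  · rw [sum_comm]
    simp_rw [← (hP _).re_trace_eq_sum b, hR]
    simp

end LinearMap

namespace Matrix

variable {𝕜 n : Type*} [RCLike 𝕜] [Fintype n] [DecidableEq n]

theorem trace_toEuclideanLin (A : Matrix n n 𝕜) :
    LinearMap.trace 𝕜 _ (toEuclideanLin A) = A.trace := by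
  rw [toEuclideanLin, toLpLin_eq_toLin]
  exact trace_toLin_eq A _

theorem IsHermitian.isSymmetricProjection_toEuclideanLin {A : Matrix n n 𝕜} (hA : A.IsHermitian)
    (hAA : IsIdempotentElem A) : (toEuclideanLin A).IsSymmetricProjection :=
  ⟨hAA.map (toLpLinAlgEquiv 2), isSymmetric_toEuclideanLin_iff.2 hA⟩

theorem trace_eq_rank_of_isIdempotentElem {K : Type*} [Field K] [CharZero K] {A : Matrix n n K}
    (hA : IsIdempotentElem A) : A.trace = A.rank := by
  rw [rank_eq_finrank_range_toLin A (Pi.basisFun K n) (Pi.basisFun K n),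
    ← trace_toLin_eq A (Pi.basisFun K n)]
  exact (LinearMap.IsIdempotentElem.isProj_range _
    (hA.map (toLinAlgEquiv (Pi.basisFun K n)))).trace

end Matrix

theorem Fin.sum_filter_val_lt_mul_eq_sum_blocks {K N R : ℕ} (μ : Fin N → ℝ) {p : Fin K → ℝ}
    (hp : ∀ k : Fin K, p k = ∑ l : Fin N with k.val * R ≤ l.val ∧ l.val < (k.val + 1) * R, μ l)
    {j : ℕ} (hj : j ≤ K) :
    ∑ l : Fin N with l.val < j * R, μ l = ∑ k : Fin K with k.val < j, p k := by
  induction j with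
  | zero => simp
  | succ j ih =>
    have hjK : j < K := hj
    have hK : (univ.filter fun k : Fin K => k.val < j + 1)
        = insert ⟨j, hjK⟩ (univ.filter fun k : Fin K => k.val < j) := by
      ext k; simp [Fin.ext_iff]; omega
    have hjR : j * R ≤ (j + 1) * R := Nat.mul_le_mul_right _ j.le_succ
    rw [hK, sum_insert (by simp), ← ih hjK.le, hp, Fin.val_mk, ← sum_filter_add_sum_filter_not
      (univ.filter fun l : Fin N => l.val < (j + 1) * R) (fun l => j * R ≤ l.val),
      filter_filter, filter_filter]
    congr 1 <;> exact sum_congr (filter_congr fun l _ => by omega) fun _ _ => rfl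

theorem f_divergence_maximized_on_grouped_spectral_projectors_general
    {n m : ℕ} (hmn : m ≤ n)
    (ρ : Matrix (Fin (2 ^ n)) (Fin (2 ^ n)) ℂ) (hρ : ρ.PosSemidef)
    (v : Fin (2 ^ n) → EuclideanSpace ℂ (Fin (2 ^ n))) (hv : Orthonormal ℂ v)
    (μ : Fin (2 ^ n) → ℝ) (hmono : Antitone μ)
    (heig : ∀ j, Matrix.toEuclideanLin ρ (v j) = (μ j : ℂ) • v j)
    (q : ℝ) (hq : q = 1 / 2 ^ m)
    (p : Fin (2 ^ m) → ℝ)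
    (hp : ∀ k : Fin (2 ^ m),
      p k = ∑ j ∈ Finset.univ.filter
        (fun j : Fin (2 ^ n) =>
          (k : ℕ) * 2 ^ (n - m) ≤ (j : ℕ) ∧ (j : ℕ) < ((k : ℕ) + 1) * 2 ^ (n - m)), μ j)
    (Λ' : Fin (2 ^ m) → Matrix (Fin (2 ^ n)) (Fin (2 ^ n)) ℂ)
    (hherm : ∀ k, (Λ' k).IsHermitian)
    (hidem : ∀ k, Λ' k * Λ' k = Λ' k)
    (hsum : ∑ k, Λ' k = 1)
    (hrank : ∀ k, (Λ' k).rank = 2 ^ (n - m))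
    (p' : Fin (2 ^ m) → ℝ) (hp' : ∀ k, (p' k : ℂ) = (Λ' k * ρ).trace) :
    ∑ k : Fin (2 ^ m), (p' k - q) ^ 2 / (p' k + q)
      ≤ ∑ k : Fin (2 ^ m), (p k - q) ^ 2 / (p k + q) := by
  let b := OrthonormalBasis.mk hv
    (hv.linearIndependent.span_eq_top_of_card_eq_finrank' (by simp)).ge
  have hT : ∀ j, Matrix.toEuclideanLin ρ (b j) = (μ j : ℂ) • b j := by
    simpa [b, OrthonormalBasis.coe_mk] using heig
  have hP k := (hherm k).isSymmetricProjection_toEuclideanLin (hidem k)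
  have hPsum : ∑ k, Matrix.toEuclideanLin (Λ' k) = 1 := by
    rw [← map_sum, hsum, Matrix.toLpLin_one]; rfl
  have hPtr k : RCLike.re (LinearMap.trace ℂ _ (Matrix.toEuclideanLin (Λ' k)))
      = (2 ^ (n - m) : ℕ) := by
    rw [Matrix.trace_toEuclideanLin, Matrix.trace_eq_rank_of_isIdempotentElem (hidem k), hrank,
      RCLike.natCast_re]
  obtain rfl : p' = fun k => RCLike.re (LinearMap.trace ℂ _
      (Matrix.toEuclideanLin (Λ' k) ∘ₗ Matrix.toEuclideanLin ρ)) := funext fun k => by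
    rw [← Matrix.toLpLin_mul_same, Matrix.trace_toEuclideanLin, ← hp']; simp
  have hμ0 j : 0 ≤ μ j := by
    simpa [inner_product_apply_eigenvector (hT j), b.norm_eq_one] using
      (Matrix.isPositive_toEuclideanLin_iff.2 hρ).re_inner_nonneg_right (b j)
  have hq0 : 0 < q := by rw [hq]; positivity
  refine (convexOn_sq_sub_div_add q).sum_le_sum_of_forall_sum_le
    (fun t ht => differentiableAt_sq_sub_div_add ht) (fun k => ?_) (fun k => ?_) (fun S => ?_) ?_
  · rw [Set.mem_Ioi, (hP k).re_trace_comp_eq_sum b hT]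
    exact (neg_lt_zero.2 hq0).trans_le (sum_nonneg fun j _ => mul_nonneg (hμ0 j) (sq_nonneg _))
  · rw [Set.mem_Ioi, hp k]
    exact (neg_lt_zero.2 hq0).trans_le (sum_nonneg fun j _ => hμ0 j)
  · exact (LinearMap.sum_re_trace_comp_le_sum_filter_val_lt b hT hP hPsum hmono hPtr S).trans_eq
      (Fin.sum_filter_val_lt_mul_eq_sum_blocks μ hp
        ((card_le_univ S).trans_eq (Fintype.card_fin _)))
  · rw [LinearMap.sum_re_trace_comp_eq_sum b hT hP hPsum]
    simpa [← pow_add, Nat.add_sub_cancel' hmn] using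
      Fin.sum_filter_val_lt_mul_eq_sum_blocks μ hp le_rfl

/-- The f-divergence `Σ (p'ₖ − q)²/(p'ₖ + q)` (with `q = 2^{−m}`) over complete families of
pairwise orthogonal rank-`2^{n−m}` projectors is maximized by the projectors grouped from the
eigenvectors of `ρ` sorted in descending order of eigenvalues. -/
theorem f_divergence_maximized_on_grouped_spectral_projectors
    {n m : ℕ} (hm : 1 ≤ m) (hmn : m ≤ n)
    (ρ : Matrix (Fin (2 ^ n)) (Fin (2 ^ n)) ℂ) (hρ : ρ.PosSemidef)
    (htr : ρ.trace = 1)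
    (v : Fin (2 ^ n) → EuclideanSpace ℂ (Fin (2 ^ n))) (hv : Orthonormal ℂ v)
    (μ : Fin (2 ^ n) → ℝ) (hmono : Antitone μ)
    (heig : ∀ j, Matrix.toEuclideanLin ρ (v j) = (μ j : ℂ) • v j)
    (q : ℝ) (hq : q = 1 / 2 ^ m)
    (p : Fin (2 ^ m) → ℝ)
    (hp : ∀ k : Fin (2 ^ m),
      p k = ∑ j ∈ Finset.univ.filter
        (fun j : Fin (2 ^ n) =>
          (k : ℕ) * 2 ^ (n - m) ≤ (j : ℕ) ∧ (j : ℕ) < ((k : ℕ) + 1) * 2 ^ (n - m)), μ j)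
    (Λ' : Fin (2 ^ m) → Matrix (Fin (2 ^ n)) (Fin (2 ^ n)) ℂ)
    (hherm : ∀ k, (Λ' k).IsHermitian)
    (hidem : ∀ k, Λ' k * Λ' k = Λ' k)
    (horth : ∀ k l, k ≠ l → Λ' k * Λ' l = 0)
    (hsum : ∑ k, Λ' k = 1)
    (hrank : ∀ k, (Λ' k).rank = 2 ^ (n - m))
    (p' : Fin (2 ^ m) → ℝ) (hp' : ∀ k, (p' k : ℂ) = (Λ' k * ρ).trace) :
    ∑ k : Fin (2 ^ m), (p' k - q) ^ 2 / (p' k + q)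
      ≤ ∑ k : Fin (2 ^ m), (p k - q) ^ 2 / (p k + q) :=
  f_divergence_maximized_on_grouped_spectral_projectors_general hmn ρ hρ v hv μ hmono heig q hq p hp
    Λ' hherm hidem hsum hrank p' hp'
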